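/- Let λ = P + U_2 P^{−1} + U_3 P^{−2} + ⋯ be a Laurent series in P^{−1} with smooth coefficients satisfying ∂_{T_n}λ = {(λ^n)_+, λ} for all n, let M be a Laurent series in P^{−1} with smooth coefficients satisfying ∂_{T_n}M = {(λ^n)_+, M} for all n, and let φ(T) be a smooth function independent of P with ∂_{T_n}φ = (λ^n)_+|_{P=φ_X} for all n. Set μ := e^{−ad φ}λ and M̃ := e^{−ad φ}M. Then ∂_{T_n}M̃ = {(μ^n)_{≥1}, M̃} for all n; moreover, if {λ, M} = 1 then {μ, M̃} = 1. -/

import Mathlib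

namespace DMKP

/-- Coefficient functions of a formal Laurent series in `P⁻¹` with time variables
`T = (T₁, …, T_N)`: `A n` is the coefficient of `P^n`. -/
abbrev Coeffs (N : ℕ) := ℤ → (Fin N → ℝ) → ℝ

variable {N : ℕ}

/-- Partial derivative in the direction of the `q`-th time variable. -/
noncomputable def pd (q : Fin N) (f : (Fin N → ℝ) → ℝ) : (Fin N → ℝ) → ℝ :=
  fun x => fderiv ℝ f x (Pi.single q 1)

/-- Finitely many positive powers of `P`. -/
def BddPow (A : Coeffs N) : Prop := ∃ m : ℤ, ∀ n : ℤ, m < n → A n = 0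

/-- All coefficients are smooth functions of the time variables. -/
def SmoothCoeffs (A : Coeffs N) : Prop := ∀ n : ℤ, ContDiff ℝ (⊤ : ℕ∞) (A n)

/-- A Laurent series in `P⁻¹` with smooth coefficients. -/
def IsLaurent (A : Coeffs N) : Prop := BddPow A ∧ SmoothCoeffs A

/-- Termwise `∂_P`. -/
def dP (A : Coeffs N) : Coeffs N := fun n x => ((n + 1 : ℤ) : ℝ) * A (n + 1) x

/-- Termwise `∂_{T_q}`. -/
noncomputable def dT (q : Fin N) (A : Coeffs N) : Coeffs N := fun n => pd q (A n)

/-- Termwise `∂_X`, where `X = T₁`. -/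
noncomputable def dX [NeZero N] (A : Coeffs N) : Coeffs N := dT 0 A

/-- Termwise product of Laurent series. -/
noncomputable def mul (A B : Coeffs N) : Coeffs N := fun n x => ∑' i : ℤ, A i x * B (n - i) x

/-- The Poisson bracket `{f,g} = f_P g_X - f_X g_P`. -/
noncomputable def pb [NeZero N] (A B : Coeffs N) : Coeffs N :=
  fun n x => mul (dP A) (dX B) n x - mul (dX A) (dP B) n x

/-- Truncation keeping only powers `P^n` with `n ≥ k`. -/
def truncGe (k : ℤ) (A : Coeffs N) : Coeffs N := fun n => if k ≤ n then A n else 0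

/-- Truncation keeping only powers `P^n` with `n ≤ k`. -/
def truncLe (k : ℤ) (A : Coeffs N) : Coeffs N := fun n => if n ≤ k then A n else 0

/-- The residue: coefficient of `P⁻¹`. -/
def res (A : Coeffs N) : (Fin N → ℝ) → ℝ := A (-1)

/-- The constant Laurent series `1`. -/
def one' : Coeffs N := fun n => if n = 0 then (fun _ => (1 : ℝ)) else 0

/-- `powC A q` is the `q`-th power `A^q`. -/
noncomputable def powC (A : Coeffs N) : ℕ → Coeffs N
  | 0 => one'
  | q + 1 => mul A (powC A q)

/-- `e^{-ad φ} A = Σ_{k≥0} (1/k!) (φ_X)^k ∂_P^k A`. -/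
noncomputable def expAdNeg [NeZero N] (φ : (Fin N → ℝ) → ℝ) (A : Coeffs N) : Coeffs N :=
  fun n x => ∑' k : ℕ, (pd 0 φ x) ^ k / (Nat.factorial k : ℝ) * (dP^[k] A) n x

/-- `e^{ad φ} A = Σ_{k≥0} (1/k!) (-φ_X)^k ∂_P^k A`. -/
noncomputable def expAdPos [NeZero N] (φ : (Fin N → ℝ) → ℝ) (A : Coeffs N) : Coeffs N :=
  fun n x => ∑' k : ℕ, (-(pd 0 φ x)) ^ k / (Nat.factorial k : ℝ) * (dP^[k] A) n x

/-- A `P`-independent function viewed as a Laurent series concentrated at `P^0`. -/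
def const (φ : (Fin N → ℝ) → ℝ) : Coeffs N := fun n => if n = 0 then φ else 0

/-- Evaluation of the polynomial (non-negative) part of `A` at `P = φ_X`. -/
noncomputable def evalAtPhiX [NeZero N] (A : Coeffs N) (φ : (Fin N → ℝ) → ℝ) :
    (Fin N → ℝ) → ℝ :=
  fun x => ∑' k : ℕ, A (k : ℤ) x * (pd 0 φ x) ^ k

/-- The shape `λ = P + U₂ P⁻¹ + U₃ P⁻² + ⋯` of the dKP Lax function. -/
def IsDKPShape (lam : Coeffs N) : Prop :=
  (lam 1 = fun _ => (1 : ℝ)) ∧ lam 0 = 0 ∧ ∀ n : ℤ, 2 ≤ n → lam n = 0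

/-- The shape `μ = P + V₀ + V₁ P⁻¹ + ⋯` of the dmKP Lax function. -/
def IsDMKPShape (mu : Coeffs N) : Prop :=
  (mu 1 = fun _ => (1 : ℝ)) ∧ ∀ n : ℤ, 2 ≤ n → mu n = 0


section PD
variable {f g : (Fin N → ℝ) → ℝ} {q r : Fin N} {x : Fin N → ℝ}

lemma pd_contDiff (hf : ContDiff ℝ (⊤ : ℕ∞) f) (q : Fin N) : ContDiff ℝ (⊤ : ℕ∞) (pd q f) :=
  (hf.fderiv_right (le_refl _)).clm_apply contDiff_const

lemma pd_zero_fun (q : Fin N) : pd q (0 : (Fin N → ℝ) → ℝ) = 0 := by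
  funext x
  have : (0 : (Fin N → ℝ) → ℝ) = fun _ => (0:ℝ) := rfl
  simp only [pd, this, fderiv_const]
  simp

lemma pd_const (c : ℝ) (q : Fin N) : pd q (fun _ => c) = 0 := by
  funext x; simp [pd, fderiv_const]

lemma pd_mul (hf : DifferentiableAt ℝ f x) (hg : DifferentiableAt ℝ g x) :
    pd q (fun y => f y * g y) x = pd q f x * g x + f x * pd q g x := by
  simp only [pd, fderiv_fun_mul hf hg]
  simp [mul_comm]
  ring

lemma pd_const_mul (c : ℝ) (hf : DifferentiableAt ℝ f x) :
    pd q (fun y => c * f y) x = c * pd q f x := by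
  simp only [pd, fderiv_const_mul hf]; simp

lemma pd_sub (hf : DifferentiableAt ℝ f x) (hg : DifferentiableAt ℝ g x) :
    pd q (fun y => f y - g y) x = pd q f x - pd q g x := by
  simp only [pd, fderiv_fun_sub hf hg]
  simp

lemma pd_finset_sum {ι : Type*} (s : Finset ι) (F : ι → (Fin N → ℝ) → ℝ)
    (h : ∀ i ∈ s, DifferentiableAt ℝ (F i) x) :
    pd q (fun y => ∑ i ∈ s, F i y) x = ∑ i ∈ s, pd q (F i) x := by
  simp only [pd, fderiv_fun_sum h]; simp

lemma pd_pow (k : ℕ) (hf : DifferentiableAt ℝ f x) :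
    pd q (fun y => f y ^ k) x = (k : ℝ) * f x ^ (k - 1) * pd q f x := by
  induction k with
  | zero => simp only [pow_zero, pd_const]; simp
  | succ k ih =>
    have : (fun y => f y ^ (k+1)) = fun y => f y * f y ^ k := by
      funext y; ring
    rw [this, pd_mul (g := fun y => f y ^ k) hf (hf.pow k), ih]
    cases k with
    | zero => norm_num
    | succ k =>
      simp only [Nat.succ_sub_one]
      push_cast
      rw [pow_succ]
      ring

lemma pd_comm (hf : ContDiff ℝ (⊤ : ℕ∞) f) (q r : Fin N) : pd q (pd r f) = pd r (pd q f) := by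
  funext x
  have h1 : ∀ v w, fderiv ℝ (fderiv ℝ f) x v w = fderiv ℝ (fderiv ℝ f) x w v := by
    intro v w
    exact (hf.contDiffAt.isSymmSndFDerivAt (by rw [minSmoothness_of_isRCLikeNormedField]; exact WithTop.coe_le_coe.mpr (le_top (a := (2 : ℕ∞))))) v w
  have h2 : ∀ s t : Fin N, pd s (pd t f) x
      = fderiv ℝ (fderiv ℝ f) x (Pi.single s 1) (Pi.single t 1) := by
    intro s t
    have hd : DifferentiableAt ℝ (fderiv ℝ f) x :=
      ((hf.fderiv_right (m := 1) (by exact WithTop.coe_le_coe.mpr (le_top (a := ((1 + 1 : ℕ) : ℕ∞))))).differentiable one_ne_zero).differentiableAt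
    simp only [pd]
    have h3 := fderiv_clm_apply (𝕜 := ℝ) (c := fderiv ℝ f)
      (u := fun _ => Pi.single t (1:ℝ)) (x := x) hd (differentiableAt_const _)
    rw [show pd t f = fun y => fderiv ℝ f y (Pi.single t 1) from rfl, h3]
    simp [fderiv_const]
  rw [h2, h2, h1]
end PD

section Bdd
variable {A B : Coeffs N} {a b : ℤ} {φ : (Fin N → ℝ) → ℝ}

/-- Support bound: all coefficients above `a` vanish. -/
def Bdd (A : Coeffs N) (a : ℤ) : Prop := ∀ n : ℤ, a < n → A n = 0

lemma bdd_mono (h : Bdd A a) (hab : a ≤ b) : Bdd A b := fun n hn => h n (lt_of_le_of_lt hab hn)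

lemma iter_dP_apply (A : Coeffs N) (k : ℕ) (n : ℤ) (x : Fin N → ℝ) :
    (dP^[k] A) n x = (∏ j ∈ Finset.range k, ((n + j + 1 : ℤ) : ℝ)) * A (n + k) x := by
  induction k generalizing n with
  | zero => simp
  | succ k ih =>
    rw [Function.iterate_succ_apply']
    show ((n + 1 : ℤ) : ℝ) * (dP^[k] A) (n + 1) x = _
    rw [ih]
    rw [Finset.prod_range_succ']
    have h1 : ∀ j : ℕ, ((n + 1 + j + 1 : ℤ) : ℝ) = ((n + (j + 1) + 1 : ℤ) : ℝ) := by
      intro j; push_cast; ring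
    have h2 : n + 1 + (k : ℤ) = n + ((k : ℕ) + 1 : ℕ) := by push_cast; ring
    rw [Finset.prod_congr rfl (fun j _ => h1 j), h2]
    push_cast
    ring

lemma bdd_dP (h : Bdd A a) : Bdd (dP A) a := by
  intro n hn
  funext x
  show ((n + 1 : ℤ) : ℝ) * A (n + 1) x = 0
  rw [h (n + 1) (by omega)]
  simp

lemma bdd_iter_dP (h : Bdd A a) (k : ℕ) : Bdd (dP^[k] A) (a - k) := by
  intro n hn
  funext x
  rw [iter_dP_apply, h (n + k) (by omega)]
  simp

lemma bdd_dP' (h : Bdd A a) : Bdd (dP A) (a - 1) := by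
  intro n hn
  funext x
  show ((n + 1 : ℤ) : ℝ) * A (n + 1) x = 0
  rw [h (n + 1) (by omega)]
  simp

lemma bdd_dT (h : Bdd A a) (q : Fin N) : Bdd (dT q A) a := by
  intro n hn
  show pd q (A n) = 0
  rw [h n hn, pd_zero_fun]

lemma summable_mul (hA : Bdd A a) (hB : Bdd B b) (n : ℤ) (x : Fin N → ℝ) :
    Summable (fun i : ℤ => A i x * B (n - i) x) := by
  apply summable_of_ne_finset_zero (s := Finset.Icc (n - b) a)
  intro i hi
  simp only [Finset.mem_Icc, not_and_or, not_le] at hi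
  rcases hi with hi | hi
  · rw [hB (n - i) (by omega)]; simp
  · rw [hA i hi]; simp

lemma mul_eq_sum {a' b' : ℤ} (hA : Bdd A a) (hB : Bdd B b) (ha : a ≤ a') (hb : b ≤ b')
    (n : ℤ) (x : Fin N → ℝ) :
    mul A B n x = ∑ i ∈ Finset.Icc (n - b') a', A i x * B (n - i) x := by
  apply tsum_eq_sum
  intro i hi
  simp only [Finset.mem_Icc, not_and_or, not_le] at hi
  rcases hi with hi | hi
  · rw [hB (n - i) (by omega)]; simp
  · rw [hA i (by omega)]; simp

lemma bdd_mul (hA : Bdd A a) (hB : Bdd B b) : Bdd (mul A B) (a + b) := by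
  intro n hn
  funext x
  rw [mul_eq_sum hA hB (le_refl a) (le_refl b) n x]
  apply Finset.sum_eq_zero
  intro i hi
  simp only [Finset.mem_Icc] at hi
  rw [hB (n - i) (by omega)]
  simp

lemma summable_expAd [NeZero N] (hA : Bdd A a) (n : ℤ) (x : Fin N → ℝ) :
    Summable (fun k : ℕ => (pd 0 φ x) ^ k / (Nat.factorial k : ℝ) * (dP^[k] A) n x) := by
  apply summable_of_ne_finset_zero (s := Finset.range ((a - n).toNat + 1))
  intro k hk
  simp only [Finset.mem_range, not_lt] at hk
  have hk' : a - n < (k : ℤ) := by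
    have := Int.self_le_toNat (a - n)
    omega
  rw [iter_dP_apply, hA (n + k) (by omega)]
  simp

lemma expAd_eq_sum [NeZero N] (hA : Bdd A a) {K : ℕ} {n : ℤ} (hK : a - n < (K : ℤ))
    (x : Fin N → ℝ) :
    expAdNeg φ A n x
      = ∑ k ∈ Finset.range K, (pd 0 φ x) ^ k / (Nat.factorial k : ℝ) * (dP^[k] A) n x := by
  apply tsum_eq_sum
  intro k hk
  simp only [Finset.mem_range, not_lt] at hk
  have hk' : a - n < (k : ℤ) := by
    have : (K : ℤ) ≤ (k : ℤ) := by exact_mod_cast hk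
    omega
  rw [iter_dP_apply, hA (n + k) (by omega)]
  simp

lemma bdd_expAd [NeZero N] (hA : Bdd A a) : Bdd (expAdNeg φ A) a := by
  intro n hn
  funext x
  have h0 : ∀ k : ℕ, (pd 0 φ x) ^ k / (Nat.factorial k : ℝ) * (dP^[k] A) n x = 0 := by
    intro k
    rw [iter_dP_apply, hA (n + k) (by omega)]
    simp
  calc expAdNeg φ A n x = ∑' k : ℕ, (0:ℝ) := tsum_congr h0
    _ = 0 := tsum_zero

lemma bdd_one' : Bdd (one' : Coeffs N) 0 := by
  intro n hn
  simp only [one', if_neg (by omega : ¬ n = 0)]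

lemma bdd_powC (hA : Bdd A 1) (m : ℕ) : Bdd (powC A m) m := by
  induction m with
  | zero => exact bdd_mono bdd_one' (by norm_num)
  | succ m ih =>
    have := bdd_mul hA ih
    exact bdd_mono this (by push_cast; omega)

lemma bdd_truncGe (hA : Bdd A a) (k : ℤ) : Bdd (truncGe k A) a := by
  intro n hn
  simp [truncGe, hA n hn]

lemma bdd_const (f : (Fin N → ℝ) → ℝ) : Bdd (const f) 0 := by
  intro n hn
  simp only [const, if_neg (by omega : ¬ n = 0)]

end Bdd

section Smooth
variable {A B : Coeffs N} {a b : ℤ} {φ : (Fin N → ℝ) → ℝ}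

lemma smooth_dP (hs : SmoothCoeffs A) : SmoothCoeffs (dP A) :=
  fun n => contDiff_const.mul (hs (n + 1))

lemma smooth_iter_dP (hs : SmoothCoeffs A) (k : ℕ) : SmoothCoeffs (dP^[k] A) := by
  induction k with
  | zero => exact hs
  | succ k ih => rw [Function.iterate_succ_apply']; exact smooth_dP ih

lemma smooth_mul (hA : Bdd A a) (hB : Bdd B b) (hsA : SmoothCoeffs A) (hsB : SmoothCoeffs B) :
    SmoothCoeffs (mul A B) := by
  intro n
  have : mul A B n = fun x => ∑ i ∈ Finset.Icc (n - b) a, A i x * B (n - i) x := by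
    funext x; exact mul_eq_sum hA hB (le_refl a) (le_refl b) n x
  rw [this]
  exact ContDiff.sum (fun i _ => (hsA i).mul (hsB (n - i)))

lemma smooth_expAd [NeZero N] (hφ : ContDiff ℝ (⊤ : ℕ∞) φ) (hA : Bdd A a) (hs : SmoothCoeffs A) :
    SmoothCoeffs (expAdNeg φ A) := by
  intro n
  have hK : a - n < ((a - n).toNat + 1 : ℕ) := by
    have := Int.self_le_toNat (a - n); push_cast; omega
  have : expAdNeg φ A n = fun x => ∑ k ∈ Finset.range ((a - n).toNat + 1),
      (pd 0 φ x) ^ k / (Nat.factorial k : ℝ) * (dP^[k] A) n x := by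
    funext x; exact expAd_eq_sum hA hK x
  rw [this]
  apply ContDiff.sum
  intro k _
  exact (((pd_contDiff hφ 0).pow k).div_const _).mul (smooth_iter_dP hs k n)

lemma smooth_one' : SmoothCoeffs (one' : Coeffs N) := by
  intro n
  by_cases h : n = 0 <;> simp [one', h] <;> exact contDiff_const

lemma smooth_powC (hA : Bdd A 1) (hs : SmoothCoeffs A) (m : ℕ) : SmoothCoeffs (powC A m) := by
  induction m with
  | zero => exact smooth_one'
  | succ m ih => exact smooth_mul hA (bdd_powC hA m) hs ih

lemma smooth_truncGe (hs : SmoothCoeffs A) (k : ℤ) : SmoothCoeffs (truncGe k A) := by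
  intro n
  by_cases h : k ≤ n <;> simp [truncGe, h]
  · exact hs n
  · exact contDiff_const

lemma smooth_const (hf : ContDiff ℝ (⊤ : ℕ∞) φ) : SmoothCoeffs (const φ) := by
  intro n
  by_cases h : n = 0 <;> simp [const, h]
  · exact hf
  · exact contDiff_const

end Smooth

section Alg
variable [NeZero N] {A B : Coeffs N} {a b : ℤ} {φ : (Fin N → ℝ) → ℝ}

lemma mul_comm' (A B : Coeffs N) (n : ℤ) (x : Fin N → ℝ) : mul A B n x = mul B A n x := by
  show ∑' i : ℤ, A i x * B (n - i) x = ∑' i : ℤ, B i x * A (n - i) x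
  have := (Equiv.subLeft n).tsum_eq (f := fun i : ℤ => B i x * A (n - i) x)
  rw [← this]
  apply tsum_congr
  intro i
  simp only [Equiv.subLeft_apply]
  rw [show n - (n - i) = i by ring]
  ring

lemma dP_mul (hA : Bdd A a) (hB : Bdd B b) :
    dP (mul A B) = fun n x => mul (dP A) B n x + mul A (dP B) n x := by
  funext n x
  show ((n + 1 : ℤ) : ℝ) * mul A B (n + 1) x = _
  have e1 : mul (dP A) B n x = ∑' i : ℤ, ((i : ℤ) : ℝ) * A i x * B (n + 1 - i) x := by
    show ∑' i : ℤ, (((i + 1 : ℤ) : ℝ) * A (i + 1) x) * B (n - i) x = _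
    rw [← (Equiv.addRight (1 : ℤ)).tsum_eq (f := fun i : ℤ => ((i : ℤ) : ℝ) * A i x * B (n + 1 - i) x)]
    apply tsum_congr
    intro i
    simp only [Equiv.coe_addRight]
    rw [show n + 1 - (i + 1) = n - i by ring]
  have e2 : mul A (dP B) n x = ∑' i : ℤ, A i x * (((n + 1 - i : ℤ) : ℝ) * B (n + 1 - i) x) := by
    apply tsum_congr
    intro i
    show A i x * (((n - i + 1 : ℤ) : ℝ) * B (n - i + 1) x) = _
    rw [show n - i + 1 = n + 1 - i by ring]
  rw [e1, e2]
  have s1 : Summable (fun i : ℤ => ((i : ℤ) : ℝ) * A i x * B (n + 1 - i) x) := by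
    apply summable_of_ne_finset_zero (s := Finset.Icc (n + 1 - b) a)
    intro i hi
    simp only [Finset.mem_Icc, not_and_or, not_le] at hi
    rcases hi with hi | hi
    · rw [hB (n + 1 - i) (by omega)]; simp
    · rw [hA i hi]; simp
  have s2 : Summable (fun i : ℤ => A i x * (((n + 1 - i : ℤ) : ℝ) * B (n + 1 - i) x)) := by
    apply summable_of_ne_finset_zero (s := Finset.Icc (n + 1 - b) a)
    intro i hi
    simp only [Finset.mem_Icc, not_and_or, not_le] at hi
    rcases hi with hi | hi
    · rw [hB (n + 1 - i) (by omega)]; simp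
    · rw [hA i hi]; simp
  rw [← s1.tsum_add s2]
  have e0 : mul A B (n + 1) x = ∑' i : ℤ, A i x * B (n + 1 - i) x := rfl
  rw [e0, ← tsum_mul_left]
  apply tsum_congr
  intro i
  have : ((n + 1 : ℤ) : ℝ) = ((i : ℤ) : ℝ) + ((n + 1 - i : ℤ) : ℝ) := by push_cast; ring
  rw [this]
  ring

lemma pascal_sum (T : ℕ → ℕ → ℝ) (k : ℕ) :
    ∑ j ∈ Finset.range (k + 1), (k.choose j : ℝ) * (T (j + 1) (k - j) + T j (k - j + 1))
      = ∑ j ∈ Finset.range (k + 2), ((k + 1).choose j : ℝ) * T j (k + 1 - j) := by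
  have hsplit : ∀ j, (k.choose j : ℝ) * (T (j + 1) (k - j) + T j (k - j + 1))
      = (k.choose j : ℝ) * T (j + 1) (k - j) + (k.choose j : ℝ) * T j (k - j + 1) :=
    fun j => by ring
  rw [Finset.sum_congr rfl (fun j _ => hsplit j), Finset.sum_add_distrib]
  rw [Finset.sum_range_succ (f := fun j => (k.choose j : ℝ) * T (j + 1) (k - j))]
  rw [Finset.sum_range_succ' (f := fun j => (k.choose j : ℝ) * T j (k - j + 1))]
  rw [show k + 2 = (k + 1) + 1 from rfl]
  rw [Finset.sum_range_succ' (f := fun j => ((k + 1).choose j : ℝ) * T j (k + 1 - j))]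
  rw [Finset.sum_range_succ (f := fun j => ((k + 1).choose (j + 1) : ℝ) * T (j + 1) (k + 1 - (j + 1)))]
  simp only [Nat.choose_self, Nat.choose_zero_right, Nat.cast_one, one_mul, Nat.sub_self,
    Nat.sub_zero, Nat.succ_sub_succ]
  have e1 : ∀ j ∈ Finset.range k, (k.choose (j + 1) : ℝ) * T (j + 1) (k - (j + 1) + 1)
      = (k.choose (j + 1) : ℝ) * T (j + 1) (k - j) := by
    intro j hj
    simp only [Finset.mem_range] at hj
    rw [show k - (j + 1) + 1 = k - j by omega]
  have e2 : ∀ j ∈ Finset.range k, ((k + 1).choose (j + 1) : ℝ) * T (j + 1) (k - j)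
      = (k.choose j : ℝ) * T (j + 1) (k - j) + (k.choose (j + 1) : ℝ) * T (j + 1) (k - j) := by
    intro j hj
    rw [Nat.choose_succ_succ]
    push_cast
    ring
  rw [Finset.sum_congr rfl e1, Finset.sum_congr rfl e2, Finset.sum_add_distrib]
  ring

lemma iter_dP_mul (hA : Bdd A a) (hB : Bdd B b) (k : ℕ) (n : ℤ) (x : Fin N → ℝ) :
    (dP^[k] (mul A B)) n x
      = ∑ j ∈ Finset.range (k + 1),
          (k.choose j : ℝ) * mul (dP^[j] A) (dP^[k - j] B) n x := by
  induction k generalizing n with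
  | zero => simp
  | succ k ih =>
    rw [Function.iterate_succ_apply']
    show ((n + 1 : ℤ) : ℝ) * (dP^[k] (mul A B)) (n + 1) x = _
    rw [ih (n + 1), Finset.mul_sum]
    have step : ∀ j ∈ Finset.range (k + 1),
        ((n + 1 : ℤ) : ℝ) * ((k.choose j : ℝ) * mul (dP^[j] A) (dP^[k - j] B) (n + 1) x)
        = (k.choose j : ℝ) * (mul (dP^[j + 1] A) (dP^[k - j] B) n x
            + mul (dP^[j] A) (dP^[k - j + 1] B) n x) := by
      intro j _
      have hd := dP_mul (A := dP^[j] A) (B := dP^[k - j] B)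
        (bdd_iter_dP hA j) (bdd_iter_dP hB (k - j))
      have hd' := congrFun (congrFun hd n) x
      have lhs_eq : dP (mul (dP^[j] A) (dP^[k - j] B)) n x
          = ((n + 1 : ℤ) : ℝ) * mul (dP^[j] A) (dP^[k - j] B) (n + 1) x := rfl
      rw [lhs_eq] at hd'
      rw [mul_left_comm, hd', Function.iterate_succ_apply' dP j A,
        Function.iterate_succ_apply' dP (k - j) B]
    rw [Finset.sum_congr rfl step]
    exact pascal_sum (fun u v => mul (dP^[u] A) (dP^[v] B) n x) k


lemma triangle_sum {F : ℕ → ℕ → ℝ} {K : ℕ} (h0 : ∀ j l, K ≤ j + l → F j l = 0) :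
    ∑ k ∈ Finset.range K, ∑ j ∈ Finset.range (k + 1), F j (k - j)
      = ∑ j ∈ Finset.range K, ∑ l ∈ Finset.range K, F j l := by
  calc ∑ k ∈ Finset.range K, ∑ j ∈ Finset.range (k + 1), F j (k - j)
      = ∑ p ∈ (Finset.range K).sigma (fun k => Finset.range (k + 1)), F p.2 (p.1 - p.2) := by
        rw [Finset.sum_sigma]
    _ = ∑ p ∈ (Finset.range K).sigma (fun j => Finset.range (K - j)), F p.1 p.2 := by
        apply Finset.sum_nbij' (i := fun p : Σ _ : ℕ, ℕ => (⟨p.2, p.1 - p.2⟩ : Σ _ : ℕ, ℕ))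
          (j := fun p : Σ _ : ℕ, ℕ => (⟨p.1 + p.2, p.1⟩ : Σ _ : ℕ, ℕ))
        · intro p hp
          simp only [Finset.mem_sigma, Finset.mem_range] at hp ⊢
          omega
        · intro p hp
          simp only [Finset.mem_sigma, Finset.mem_range] at hp ⊢
          omega
        · intro p hp
          simp only [Finset.mem_sigma, Finset.mem_range] at hp
          apply Sigma.ext <;> simp <;> omega
        · intro p hp
          simp only [Finset.mem_sigma, Finset.mem_range] at hp
          apply Sigma.ext <;> simp <;> omega
        · intro p hp
          rfl
    _ = ∑ j ∈ Finset.range K, ∑ l ∈ Finset.range (K - j), F j l := by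
        rw [Finset.sum_sigma]
    _ = ∑ j ∈ Finset.range K, ∑ l ∈ Finset.range K, F j l := by
        apply Finset.sum_congr rfl
        intro j hj
        apply Finset.sum_subset
        · apply Finset.range_subset_range.mpr
          omega
        · intro l _ hl
          simp only [Finset.mem_range, not_lt] at hl
          exact h0 j l (by omega)

lemma expAd_mul (hA : Bdd A a) (hB : Bdd B b) (φ : (Fin N → ℝ) → ℝ) :
    expAdNeg φ (mul A B) = mul (expAdNeg φ A) (expAdNeg φ B) := by
  funext n x
  set c : ℝ := pd 0 φ x with hc
  set K : ℕ := (a + b - n).toNat + 1 with hK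
  have hKgt : a + b - n < (K : ℤ) := by
    have := Int.self_le_toNat (a + b - n); push_cast; omega
  have hTz : ∀ j l : ℕ, K ≤ j + l → mul (dP^[j] A) (dP^[l] B) n x = 0 := by
    intro j l hjl
    have hb := bdd_mul (bdd_iter_dP hA j) (bdd_iter_dP hB l)
    have : a - j + (b - l) < n := by
      have : (K : ℤ) ≤ (j : ℤ) + l := by exact_mod_cast hjl
      omega
    rw [hb n (by omega)]
    simp
  -- LHS
  have lhs_eq : expAdNeg φ (mul A B) n x
      = ∑ j ∈ Finset.range K, ∑ l ∈ Finset.range K,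
          c ^ j / (Nat.factorial j : ℝ) * (c ^ l / (Nat.factorial l : ℝ))
            * mul (dP^[j] A) (dP^[l] B) n x := by
    rw [expAd_eq_sum (bdd_mul hA hB) hKgt x]
    have e1 : ∀ k ∈ Finset.range K, c ^ k / (Nat.factorial k : ℝ) * (dP^[k] (mul A B)) n x
        = ∑ j ∈ Finset.range (k + 1), c ^ j / (Nat.factorial j : ℝ)
            * (c ^ (k - j) / (Nat.factorial (k - j) : ℝ)) * mul (dP^[j] A) (dP^[k - j] B) n x := by
      intro k _
      rw [iter_dP_mul hA hB k n x, Finset.mul_sum]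
      apply Finset.sum_congr rfl
      intro j hj
      simp only [Finset.mem_range] at hj
      have hjk : j ≤ k := by omega
      have hfac : (k.choose j : ℝ) = (Nat.factorial k : ℝ)
          / ((Nat.factorial j : ℝ) * (Nat.factorial (k - j) : ℝ)) := by
        have h' : k.choose j * (Nat.factorial j * Nat.factorial (k - j)) = Nat.factorial k := by
          rw [← Nat.choose_mul_factorial_mul_factorial hjk]; ring
        field_simp
        rw [← mul_assoc] at h'; exact_mod_cast h'
      rw [hfac, show c ^ k = c ^ j * c ^ (k - j) by rw [← pow_add]; congr 1; omega]
      have f1 : (Nat.factorial k : ℝ) ≠ 0 := Nat.cast_ne_zero.mpr (Nat.factorial_ne_zero k)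
      have f2 : (Nat.factorial j : ℝ) ≠ 0 := Nat.cast_ne_zero.mpr (Nat.factorial_ne_zero j)
      have f3 : (Nat.factorial (k - j) : ℝ) ≠ 0 := Nat.cast_ne_zero.mpr (Nat.factorial_ne_zero _)
      field_simp
    rw [Finset.sum_congr rfl e1]
    exact triangle_sum
      (F := fun j l => c ^ j / (Nat.factorial j : ℝ) * (c ^ l / (Nat.factorial l : ℝ))
        * mul (dP^[j] A) (dP^[l] B) n x)
      (fun j l hjl => by rw [hTz j l hjl]; ring)
  -- RHS
  have rhs_eq : mul (expAdNeg φ A) (expAdNeg φ B) n x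
      = ∑ j ∈ Finset.range K, ∑ l ∈ Finset.range K,
          c ^ j / (Nat.factorial j : ℝ) * (c ^ l / (Nat.factorial l : ℝ))
            * mul (dP^[j] A) (dP^[l] B) n x := by
    rw [mul_eq_sum (bdd_expAd hA) (bdd_expAd hB) (le_refl a) (le_refl b) n x]
    have e2 : ∀ i ∈ Finset.Icc (n - b) a, expAdNeg φ A i x * expAdNeg φ B (n - i) x
        = ∑ j ∈ Finset.range K, ∑ l ∈ Finset.range K,
            (c ^ j / (Nat.factorial j : ℝ) * (dP^[j] A) i x)
              * (c ^ l / (Nat.factorial l : ℝ) * (dP^[l] B) (n - i) x) := by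
      intro i hi
      simp only [Finset.mem_Icc] at hi
      rw [expAd_eq_sum hA (by omega : a - i < (K : ℤ)) x,
        expAd_eq_sum hB (by omega : b - (n - i) < (K : ℤ)) x,
        Finset.sum_mul_sum]
    rw [Finset.sum_congr rfl e2]
    rw [Finset.sum_comm]
    apply Finset.sum_congr rfl
    intro j _
    rw [Finset.sum_comm]
    apply Finset.sum_congr rfl
    intro l _
    have : mul (dP^[j] A) (dP^[l] B) n x
        = ∑ i ∈ Finset.Icc (n - b) a, (dP^[j] A) i x * (dP^[l] B) (n - i) x :=
      mul_eq_sum (bdd_iter_dP hA j) (bdd_iter_dP hB l)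
        (by omega : a - j ≤ a) (by omega : b - l ≤ b) n x
    rw [this, Finset.mul_sum]
    apply Finset.sum_congr rfl
    intro i _
    ring
  rw [lhs_eq, rhs_eq]


lemma dP_expAd (φ : (Fin N → ℝ) → ℝ) (A : Coeffs N) :
    dP (expAdNeg φ A) = expAdNeg φ (dP A) := by
  funext n x
  show ((n + 1 : ℤ) : ℝ) * expAdNeg φ A (n + 1) x = _
  rw [show expAdNeg φ A (n + 1) x
      = ∑' k : ℕ, (pd 0 φ x) ^ k / (Nat.factorial k : ℝ) * (dP^[k] A) (n + 1) x from rfl,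
    ← tsum_mul_left]
  apply tsum_congr
  intro k
  have e : dP^[k] (dP A) n x = dP (dP^[k] A) n x := by
    rw [← Function.iterate_succ_apply dP k A, Function.iterate_succ_apply' dP k A]
  show ((n + 1 : ℤ) : ℝ) * ((pd 0 φ x) ^ k / (Nat.factorial k : ℝ) * (dP^[k] A) (n + 1) x)
      = (pd 0 φ x) ^ k / (Nat.factorial k : ℝ) * (dP^[k] (dP A)) n x
  rw [e, show dP (dP^[k] A) n x = ((n + 1 : ℤ) : ℝ) * (dP^[k] A) (n + 1) x from rfl]
  ring

lemma expAd_sub {C D : Coeffs N} {c₀ d₀ : ℤ} (hC : Bdd C c₀) (hD : Bdd D d₀)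
    (φ : (Fin N → ℝ) → ℝ) :
    expAdNeg φ (fun n x => C n x - D n x)
      = fun n x => expAdNeg φ C n x - expAdNeg φ D n x := by
  funext n x
  have hCD : ∀ k : ℕ, (dP^[k] (fun (n : ℤ) (x : Fin N → ℝ) => C n x - D n x)) n x
      = (dP^[k] C) n x - (dP^[k] D) n x := by
    intro k
    rw [iter_dP_apply, iter_dP_apply, iter_dP_apply]
    ring
  show ∑' k : ℕ, (pd 0 φ x) ^ k / (Nat.factorial k : ℝ)
      * (dP^[k] (fun (n : ℤ) (x : Fin N → ℝ) => C n x - D n x)) n x = _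
  calc ∑' k : ℕ, (pd 0 φ x) ^ k / (Nat.factorial k : ℝ)
        * (dP^[k] (fun (n : ℤ) (x : Fin N → ℝ) => C n x - D n x)) n x
      = ∑' k : ℕ, ((pd 0 φ x) ^ k / (Nat.factorial k : ℝ) * (dP^[k] C) n x
          - (pd 0 φ x) ^ k / (Nat.factorial k : ℝ) * (dP^[k] D) n x) := by
        apply tsum_congr
        intro k
        rw [hCD k]
        ring
    _ = _ := (summable_expAd hC n x).tsum_sub (summable_expAd hD n x)

lemma expAd_one (φ : (Fin N → ℝ) → ℝ) : expAdNeg φ (one' : Coeffs N) = one' := by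
  funext n x
  show ∑' k : ℕ, (pd 0 φ x) ^ k / (Nat.factorial k : ℝ) * (dP^[k] (one' : Coeffs N)) n x
      = one' n x
  by_cases h : n = 0
  · subst h
    rw [tsum_eq_single 0 (by
      intro k hk
      rw [iter_dP_apply]
      have h0 : ((0 : ℤ) + (k : ℤ)) ≠ 0 := by
        have : k ≠ 0 := hk
        omega
      rw [show (one' : Coeffs N) ((0:ℤ) + (k:ℤ)) = 0 from if_neg h0]
      simp)]
    simp [one']
  · have hz : ∀ k : ℕ, (pd 0 φ x) ^ k / (Nat.factorial k : ℝ)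
        * (dP^[k] (one' : Coeffs N)) n x = 0 := by
      intro k
      rw [iter_dP_apply]
      by_cases hnk : n + (k : ℤ) = 0
      · have hk1 : ((-(n+1)).toNat) < k := by omega
        rw [Finset.prod_eq_zero (Finset.mem_range.mpr hk1)
          (by
            have : (n + ((-(n+1)).toNat : ℤ) + 1) = 0 := by omega
            exact_mod_cast this)]
        simp
      · rw [show (one' : Coeffs N) (n + (k:ℤ)) = 0 from if_neg hnk]
        simp
    rw [tsum_congr hz, tsum_zero]
    simp [one', h]

lemma expAd_pow {A : Coeffs N} (hA : Bdd A 1) (φ : (Fin N → ℝ) → ℝ) (m : ℕ) :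
    powC (expAdNeg φ A) m = expAdNeg φ (powC A m) := by
  induction m with
  | zero => exact (expAd_one φ).symm
  | succ m ih =>
    show mul (expAdNeg φ A) (powC (expAdNeg φ A) m) = _
    rw [ih, ← expAd_mul hA (bdd_powC hA m) φ]
    rfl

lemma dT_expAd {A : Coeffs N} {a : ℤ} {φ : (Fin N → ℝ) → ℝ}
    (hφ : ContDiff ℝ (⊤ : ℕ∞) φ) (hA : Bdd A a) (hs : SmoothCoeffs A) (q : Fin N) :
    dT q (expAdNeg φ A) = fun n x => expAdNeg φ (dT q A) n x
      + pd q (pd 0 φ) x * expAdNeg φ (dP A) n x := by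
  funext n x
  have hc : ContDiff ℝ (⊤ : ℕ∞) (pd 0 φ) := pd_contDiff hφ 0
  have hK : a - n < (((a - n).toNat + 1 : ℕ) : ℤ) := by
    have := Int.self_le_toNat (a - n); push_cast; omega
  have hK' : (a - 1) - n < (((a - n).toNat : ℕ) : ℤ) := by
    have := Int.self_le_toNat (a - n); push_cast; omega
  have hrep : expAdNeg φ A n = fun y => ∑ k ∈ Finset.range ((a - n).toNat + 1),
      ((∏ j ∈ Finset.range k, ((n + j + 1 : ℤ) : ℝ)) / (Nat.factorial k : ℝ))
        * ((pd 0 φ y) ^ k * A (n + k) y) := by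
    funext y
    rw [expAd_eq_sum hA hK y]
    apply Finset.sum_congr rfl
    intro k _
    rw [iter_dP_apply]
    ring
  show pd q (expAdNeg φ A n) x = _
  rw [hrep]
  rw [pd_finset_sum _ _ (fun k _ =>
    ((contDiff_const.mul ((hc.pow k).mul (hs (n + k)))).differentiable (by simp)).differentiableAt)]
  have hterm : ∀ k ∈ Finset.range ((a - n).toNat + 1),
      pd q (fun y => ((∏ j ∈ Finset.range k, ((n + j + 1 : ℤ) : ℝ)) / (Nat.factorial k : ℝ))
        * ((pd 0 φ y) ^ k * A (n + k) y)) x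
      = ((∏ j ∈ Finset.range k, ((n + j + 1 : ℤ) : ℝ)) / (Nat.factorial k : ℝ))
          * (((k : ℝ) * (pd 0 φ x) ^ (k - 1) * pd q (pd 0 φ) x) * A (n + k) x)
        + ((∏ j ∈ Finset.range k, ((n + j + 1 : ℤ) : ℝ)) / (Nat.factorial k : ℝ))
          * ((pd 0 φ x) ^ k * dT q A (n + k) x) := by
    intro k _
    rw [pd_const_mul _ (((hc.pow k).mul (hs (n + k))).differentiable (by simp)).differentiableAt]
    rw [pd_mul ((hc.pow k).differentiable (by simp)).differentiableAt
      ((hs (n + k)).differentiable (by simp)).differentiableAt]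
    rw [pd_pow k (hc.differentiable (by simp)).differentiableAt]
    show _ = _
    rw [show pd q (A (n + k)) x = dT q A (n + k) x from rfl]
    ring
  rw [Finset.sum_congr rfl hterm, Finset.sum_add_distrib]
  have h2 : ∑ k ∈ Finset.range ((a - n).toNat + 1),
      ((∏ j ∈ Finset.range k, ((n + j + 1 : ℤ) : ℝ)) / (Nat.factorial k : ℝ))
        * ((pd 0 φ x) ^ k * dT q A (n + k) x)
      = expAdNeg φ (dT q A) n x := by
    rw [expAd_eq_sum (bdd_dT hA q) hK x]
    apply Finset.sum_congr rfl
    intro k _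
    rw [iter_dP_apply]
    show _ = (pd 0 φ x) ^ k / (Nat.factorial k : ℝ)
      * ((∏ j ∈ Finset.range k, ((n + j + 1 : ℤ) : ℝ)) * dT q A (n + k) x)
    ring
  have h1 : ∑ k ∈ Finset.range ((a - n).toNat + 1),
      ((∏ j ∈ Finset.range k, ((n + j + 1 : ℤ) : ℝ)) / (Nat.factorial k : ℝ))
        * (((k : ℝ) * (pd 0 φ x) ^ (k - 1) * pd q (pd 0 φ) x) * A (n + k) x)
      = pd q (pd 0 φ) x * expAdNeg φ (dP A) n x := by
    rw [expAd_eq_sum (bdd_dP' hA) hK' x, Finset.mul_sum]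
    rw [Finset.sum_range_succ' (f := fun k =>
      ((∏ j ∈ Finset.range k, ((n + j + 1 : ℤ) : ℝ)) / (Nat.factorial k : ℝ))
        * (((k : ℝ) * (pd 0 φ x) ^ (k - 1) * pd q (pd 0 φ) x) * A (n + k) x))]
    simp only [Nat.cast_zero, zero_mul, mul_zero, add_zero, Nat.cast_ofNat, pow_zero]
    apply Finset.sum_congr rfl
    intro j _
    have e : dP^[j] (dP A) n x = dP^[j + 1] A n x := by
      rw [Function.iterate_succ_apply]
    rw [e, iter_dP_apply]
    have hf : ((j + 1 : ℕ).factorial : ℝ) = ((j + 1 : ℕ) : ℝ) * ((j.factorial : ℕ) : ℝ) := by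
      rw [Nat.factorial_succ]; push_cast; ring
    have f2 : ((j.factorial : ℕ) : ℝ) ≠ 0 := Nat.cast_ne_zero.mpr (Nat.factorial_ne_zero j)
    have f3 : ((j + 1 : ℕ) : ℝ) ≠ 0 := by positivity
    show ((∏ i ∈ Finset.range (j + 1), ((n + i + 1 : ℤ) : ℝ)) / ((j + 1 : ℕ).factorial : ℝ))
        * ((((j + 1 : ℕ) : ℝ)) * (pd 0 φ x) ^ ((j + 1) - 1) * pd q (pd 0 φ) x * A (n + (j + 1 : ℕ)) x)
      = pd q (pd 0 φ) x * ((pd 0 φ x) ^ j / (Nat.factorial j : ℝ)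
          * ((∏ i ∈ Finset.range (j + 1), ((n + i + 1 : ℤ) : ℝ)) * A (n + ((j + 1 : ℕ) : ℤ)) x))
    rw [hf]
    simp only [Nat.add_sub_cancel]
    field_simp
  rw [h1, h2]
  ring

lemma mul_add_smulR {C D E : Coeffs N} {c₀ d₀ e₀ : ℤ} (hC : Bdd C c₀) (hD : Bdd D d₀)
    (hE : Bdd E e₀) (g : (Fin N → ℝ) → ℝ) :
    mul C (fun n x => D n x + g x * E n x)
      = fun n x => mul C D n x + g x * mul C E n x := by
  funext n x
  show ∑' i : ℤ, C i x * (D (n - i) x + g x * E (n - i) x) = _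
  have e : ∀ i : ℤ, C i x * (D (n - i) x + g x * E (n - i) x)
      = C i x * D (n - i) x + g x * (C i x * E (n - i) x) := fun i => by ring
  rw [tsum_congr e, (summable_mul hC hD n x).tsum_add
    ((summable_mul hC hE n x).mul_left (g x)), tsum_mul_left]
  rfl

lemma mul_const_left (g : (Fin N → ℝ) → ℝ) (C : Coeffs N) (n : ℤ) (x : Fin N → ℝ) :
    mul (const g) C n x = g x * C n x := by
  show ∑' i : ℤ, const g i x * C (n - i) x = _
  rw [tsum_eq_single 0 (by
    intro i hi
    rw [show const g i = 0 from if_neg hi]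
    simp)]
  simp [const]

lemma dP_const (g : (Fin N → ℝ) → ℝ) : dP (const g) = fun _ _ => 0 := by
  funext m y
  show ((m + 1 : ℤ) : ℝ) * const g (m + 1) y = 0
  by_cases h : m + 1 = 0
  · rw [h]; simp
  · rw [show const g (m + 1) = 0 from if_neg h]; simp

lemma pb_const_left (g : (Fin N → ℝ) → ℝ) (B : Coeffs N) :
    pb (const g) B = fun n x => -(pd 0 g x) * dP B n x := by
  funext n x
  show mul (dP (const g)) (dX B) n x - mul (dX (const g)) (dP B) n x = _
  have h1 : mul (dP (const g)) (dX B) n x = 0 := by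
    show ∑' i : ℤ, dP (const g) i x * dX B (n - i) x = 0
    have hz : ∀ i : ℤ, dP (const g) i x * dX B (n - i) x = 0 := by
      intro i
      rw [show dP (const g) i x = 0 from congrFun (congrFun (dP_const g) i) x, zero_mul]
    rw [tsum_congr hz]
    exact tsum_zero
  have h2 : dX (const g) = const (pd 0 g) := by
    funext m
    show pd 0 (const g m) = const (pd 0 g) m
    by_cases h : m = 0
    · subst h; rfl
    · rw [show const g m = 0 from if_neg h, show const (pd 0 g) m = 0 from if_neg h, pd_zero_fun]
  rw [h1, h2, mul_const_left]
  ring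

lemma mul_subL {C D E : Coeffs N} {c₀ d₀ e₀ : ℤ} (hC : Bdd C c₀) (hD : Bdd D d₀)
    (hE : Bdd E e₀) (n : ℤ) (x : Fin N → ℝ) :
    mul (fun n x => C n x - D n x) E n x = mul C E n x - mul D E n x := by
  show ∑' i : ℤ, (C i x - D i x) * E (n - i) x = _
  rw [tsum_congr (fun i : ℤ =>
    show (C i x - D i x) * E (n - i) x = C i x * E (n - i) x - D i x * E (n - i) x by ring)]
  exact (summable_mul hC hE n x).tsum_sub (summable_mul hD hE n x)

lemma pb_sub_left {A C B : Coeffs N} {a c₀ b : ℤ} (hA : Bdd A a) (hC : Bdd C c₀) (hB : Bdd B b)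
    (hsA : SmoothCoeffs A) (hsC : SmoothCoeffs C) :
    pb (fun n x => A n x - C n x) B = fun n x => pb A B n x - pb C B n x := by
  funext n x
  have hdP : dP (fun n x => A n x - C n x) = fun n x => dP A n x - dP C n x := by
    funext m y
    show ((m + 1 : ℤ) : ℝ) * (A (m + 1) y - C (m + 1) y) = _
    show _ = ((m + 1 : ℤ) : ℝ) * A (m + 1) y - ((m + 1 : ℤ) : ℝ) * C (m + 1) y
    ring
  have hdX : dX (fun n x => A n x - C n x) = fun n x => dT 0 A n x - dT 0 C n x := by
    funext m y
    show pd 0 (fun z => A m z - C m z) y = _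
    rw [pd_sub ((hsA m).differentiable (by simp)).differentiableAt
      ((hsC m).differentiable (by simp)).differentiableAt]
    rfl
  show mul (dP (fun n x => A n x - C n x)) (dT 0 B) n x
      - mul (dX (fun n x => A n x - C n x)) (dP B) n x = _
  rw [hdP, hdX, mul_subL (bdd_dP hA) (bdd_dP hC) (bdd_dT hB 0) n x,
    mul_subL (bdd_dT hA 0) (bdd_dT hC 0) (bdd_dP hB) n x]
  show _ = mul (dP A) (dT 0 B) n x - mul (dT 0 A) (dP B) n x
    - (mul (dP C) (dT 0 B) n x - mul (dT 0 C) (dP B) n x)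
  ring

lemma prod_cast_factorial (k : ℕ) :
    (∏ j ∈ Finset.range k, (((0:ℤ) + j + 1 : ℤ) : ℝ)) = (Nat.factorial k : ℝ) := by
  have e : ∀ j ∈ Finset.range k, (((0:ℤ) + j + 1 : ℤ) : ℝ) = ((j + 1 : ℕ) : ℝ) := by
    intro j _; push_cast; ring
  rw [Finset.prod_congr rfl e, ← Nat.cast_prod, Finset.prod_range_add_one_eq_factorial]

lemma trunc_expAd (φ : (Fin N → ℝ) → ℝ) (Λ : Coeffs N) :
    truncGe 1 (expAdNeg φ Λ)
      = fun n x => expAdNeg φ (truncGe 0 Λ) n x - const (evalAtPhiX Λ φ) n x := by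
  funext n x
  rcases lt_trichotomy n 0 with hn | hn | hn
  · have l1 : truncGe 1 (expAdNeg φ Λ) n x = 0 := by
      rw [show truncGe 1 (expAdNeg φ Λ) n = 0 from if_neg (by omega)]; rfl
    have l2 : const (evalAtPhiX Λ φ) n x = 0 := by
      rw [show const (evalAtPhiX Λ φ) n = 0 from if_neg (by omega)]; rfl
    have l3 : expAdNeg φ (truncGe 0 Λ) n x = 0 := by
      show ∑' k : ℕ, (pd 0 φ x) ^ k / (Nat.factorial k : ℝ) * (dP^[k] (truncGe 0 Λ)) n x = 0
      rw [tsum_congr (fun k : ℕ => ?_), tsum_zero]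
      rw [iter_dP_apply]
      by_cases hk : n + (k : ℤ) < 0
      · rw [show truncGe 0 Λ (n + k) = 0 from if_neg (by omega)]
        simp
      · rw [Finset.prod_eq_zero (i := (-(n+1)).toNat) (Finset.mem_range.mpr (by omega))
          (by
            have : (n + (((-(n+1)).toNat : ℕ) : ℤ) + 1) = 0 := by omega
            exact_mod_cast this)]
        simp
    rw [l1, l2, l3]
    ring
  · subst hn
    have l1 : truncGe 1 (expAdNeg φ Λ) 0 x = 0 := by
      rw [show truncGe 1 (expAdNeg φ Λ) 0 = 0 from if_neg (by omega)]; rfl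
    have l2 : const (evalAtPhiX Λ φ) 0 x = evalAtPhiX Λ φ x := by
      rw [show const (evalAtPhiX Λ φ) 0 = evalAtPhiX Λ φ from if_pos rfl]
    have l3 : expAdNeg φ (truncGe 0 Λ) 0 x = evalAtPhiX Λ φ x := by
      show ∑' k : ℕ, (pd 0 φ x) ^ k / (Nat.factorial k : ℝ) * (dP^[k] (truncGe 0 Λ)) 0 x
        = ∑' k : ℕ, Λ (k : ℤ) x * (pd 0 φ x) ^ k
      apply tsum_congr
      intro k
      rw [iter_dP_apply, prod_cast_factorial k,
        show truncGe 0 Λ ((0:ℤ) + (k:ℤ)) = Λ ((0:ℤ) + (k:ℤ)) from if_pos (by omega),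
        show ((0:ℤ) + (k:ℤ)) = (k:ℤ) by omega]
      have f1 : (Nat.factorial k : ℝ) ≠ 0 := Nat.cast_ne_zero.mpr (Nat.factorial_ne_zero k)
      field_simp
    rw [l1, l2, l3]
    ring
  · have l1 : truncGe 1 (expAdNeg φ Λ) n x = expAdNeg φ Λ n x := by
      rw [show truncGe 1 (expAdNeg φ Λ) n = expAdNeg φ Λ n from if_pos (by omega)]
    have l2 : const (evalAtPhiX Λ φ) n x = 0 := by
      rw [show const (evalAtPhiX Λ φ) n = 0 from if_neg (by omega)]; rfl
    have l3 : expAdNeg φ (truncGe 0 Λ) n x = expAdNeg φ Λ n x := by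
      apply tsum_congr
      intro k
      rw [iter_dP_apply, iter_dP_apply,
        show truncGe 0 Λ (n + (k:ℤ)) = Λ (n + (k:ℤ)) from if_pos (by omega)]
    rw [l1, l2, l3]
    ring

lemma pb_expAd {A B : Coeffs N} {a b : ℤ} {φ : (Fin N → ℝ) → ℝ}
    (hφ : ContDiff ℝ (⊤ : ℕ∞) φ) (hA : Bdd A a) (hB : Bdd B b)
    (hsA : SmoothCoeffs A) (hsB : SmoothCoeffs B) :
    pb (expAdNeg φ A) (expAdNeg φ B) = expAdNeg φ (pb A B) := by
  have hXA := dT_expAd hφ hA hsA 0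
  have hXB := dT_expAd hφ hB hsB 0
  funext n x
  show mul (dP (expAdNeg φ A)) (dT 0 (expAdNeg φ B)) n x
      - mul (dT 0 (expAdNeg φ A)) (dP (expAdNeg φ B)) n x = _
  rw [dP_expAd φ A, dP_expAd φ B, hXB, hXA]
  rw [mul_add_smulR (bdd_expAd (bdd_dP hA)) (bdd_expAd (bdd_dT hB 0))
    (bdd_expAd (bdd_dP hB)) (pd 0 (pd 0 φ))]
  have flip : mul (fun n x => expAdNeg φ (dT 0 A) n x
        + pd 0 (pd 0 φ) x * expAdNeg φ (dP A) n x) (expAdNeg φ (dP B)) n x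
      = mul (expAdNeg φ (dT 0 A)) (expAdNeg φ (dP B)) n x
        + pd 0 (pd 0 φ) x * mul (expAdNeg φ (dP A)) (expAdNeg φ (dP B)) n x := by
    rw [mul_comm', congrFun (congrFun (mul_add_smulR (bdd_expAd (bdd_dP hB))
      (bdd_expAd (bdd_dT hA 0)) (bdd_expAd (bdd_dP hA)) (pd 0 (pd 0 φ))) n) x,
      mul_comm' (expAdNeg φ (dP B)) (expAdNeg φ (dT 0 A)) n x,
      mul_comm' (expAdNeg φ (dP B)) (expAdNeg φ (dP A)) n x]
  rw [flip]
  have hpb : expAdNeg φ (pb A B) n x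
      = mul (expAdNeg φ (dP A)) (expAdNeg φ (dT 0 B)) n x
        - mul (expAdNeg φ (dT 0 A)) (expAdNeg φ (dP B)) n x := by
    have e1 : pb A B = fun n x => mul (dP A) (dT 0 B) n x - mul (dT 0 A) (dP B) n x := rfl
    rw [e1, congrFun (congrFun (expAd_sub (bdd_mul (bdd_dP hA) (bdd_dT hB 0))
      (bdd_mul (bdd_dT hA 0) (bdd_dP hB)) φ) n) x,
      expAd_mul (bdd_dP hA) (bdd_dT hB 0) φ, expAd_mul (bdd_dT hA 0) (bdd_dP hB) φ]
  rw [hpb]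
  ring

end Alg

/-- if `λ` solves dKP, the Orlov function `M` satisfies
`∂_{T_q}M = {(λ^q)_+, M}`, and `∂_{T_q}φ = (λ^q)_+|_{P=φ_X}`, then `M̃ = e^{-ad φ}M`
satisfies `∂_{T_q}M̃ = {(μ^q)_{≥1}, M̃}` with `μ = e^{-ad φ}λ`; moreover `{λ,M} = 1`
implies `{μ,M̃} = 1` (`q : Fin N` labels the time `T_{q+1}`, paired with exponent `q+1`). -/
theorem statement14 {N : ℕ} [NeZero N] (lam M : Coeffs N) (hshape : IsDKPShape lam)
    (hlam : IsLaurent lam) (hM : IsLaurent M)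
    (hdkp : ∀ q : Fin N, dT q lam = pb (truncGe 0 (powC lam ((q : ℕ) + 1))) lam)
    (horlov : ∀ q : Fin N, dT q M = pb (truncGe 0 (powC lam ((q : ℕ) + 1))) M)
    (φ : (Fin N → ℝ) → ℝ) (hφ : ContDiff ℝ (⊤ : ℕ∞) φ)
    (hφeq : ∀ q : Fin N, pd q φ = evalAtPhiX (powC lam ((q : ℕ) + 1)) φ) :
    (∀ q : Fin N, dT q (expAdNeg φ M)
        = pb (truncGe 1 (powC (expAdNeg φ lam) ((q : ℕ) + 1))) (expAdNeg φ M)) ∧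
    (pb lam M = one' → pb (expAdNeg φ lam) (expAdNeg φ M) = one') := by
  have hblam : Bdd lam 1 := fun n hn => hshape.2.2 n (by omega)
  obtain ⟨m, hm⟩ := hM.1
  have hbM : Bdd M m := hm
  have hsM : SmoothCoeffs M := hM.2
  have hslam : SmoothCoeffs lam := hlam.2
  constructor
  · intro q
    have hbΛ : Bdd (powC lam ((q : ℕ) + 1)) (((q : ℕ) + 1 : ℕ) : ℤ) := bdd_powC hblam _
    have hsΛ : SmoothCoeffs (powC lam ((q : ℕ) + 1)) := smooth_powC hblam hslam _
    have hbB : Bdd (truncGe 0 (powC lam ((q : ℕ) + 1))) (((q : ℕ) + 1 : ℕ) : ℤ) :=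
      bdd_truncGe hbΛ 0
    have hsB : SmoothCoeffs (truncGe 0 (powC lam ((q : ℕ) + 1))) := smooth_truncGe hsΛ 0
    have hsE : ContDiff ℝ (⊤ : ℕ∞) (evalAtPhiX (powC lam ((q : ℕ) + 1)) φ) := by
      rw [← hφeq q]; exact pd_contDiff hφ q
    calc dT q (expAdNeg φ M)
        = fun n x => expAdNeg φ (dT q M) n x + pd q (pd 0 φ) x * expAdNeg φ (dP M) n x :=
          dT_expAd hφ hbM hsM q
      _ = fun n x => pb (expAdNeg φ (truncGe 0 (powC lam ((q : ℕ) + 1)))) (expAdNeg φ M) n x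
            + pd 0 (evalAtPhiX (powC lam ((q : ℕ) + 1)) φ) x * dP (expAdNeg φ M) n x := by
          rw [horlov q, ← pb_expAd hφ hbB hbM hsB hsM, pd_comm hφ q 0, hφeq q, ← dP_expAd φ M]
      _ = pb (truncGe 1 (powC (expAdNeg φ lam) ((q : ℕ) + 1))) (expAdNeg φ M) := by
          rw [expAd_pow hblam φ ((q : ℕ) + 1), trunc_expAd φ (powC lam ((q : ℕ) + 1))]
          rw [pb_sub_left (bdd_expAd hbB) (bdd_const _) (bdd_expAd hbM)
            (smooth_expAd hφ hbB hsB) (smooth_const hsE)]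
          rw [pb_const_left]
          funext n x
          dsimp only
          ring
  · intro h
    calc pb (expAdNeg φ lam) (expAdNeg φ M) = expAdNeg φ (pb lam M) :=
        pb_expAd hφ hblam hbM hslam hsM
      _ = expAdNeg φ one' := by rw [h]
      _ = one' := expAd_one φ


end DMKP
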